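/- Finiteness of λ_Ω. Let H satisfy Conditions A, B and C, let δ > 0, and let a ∈ C(Ω)∩L^∞(Ω) with inf_Ω a > 0. (a) If condition (i*) holds, then λ_Ω < ∞. (b) If condition (ii*) holds, Ω satisfies a uniform outer ball condition, and H additionally satisfies Condition D, then λ_Ω < ∞. -/

import Mathlib

open Real Set Filter Matrix MeasureTheory

noncomputable section

abbrev EucSp (n : ℕ) := EuclideanSpace ℝ (Fin n)
abbrev Mat (n : ℕ) := Matrix (Fin n) (Fin n) ℝ

/-- A bounded domain: a nonempty bounded open connected set. -/
def IsBoundedDomain {n : ℕ} (Ω : Set (EucSp n)) : Prop :=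
  IsOpen Ω ∧ IsConnected Ω ∧ Bornology.IsBounded Ω

/-- The Hessian matrix of `ψ` at `y`. -/
def hessianAt {n : ℕ} (ψ : EucSp n → ℝ) (y : EucSp n) : Mat n :=
  fun i j => iteratedFDeriv ℝ 2 ψ y ![EuclideanSpace.single i 1, EuclideanSpace.single j 1]

/-- Viscosity sub-solution of `H(Du, D²u) + f(x,u) = 0` in `Ω`. -/
def ViscSubSoln {n : ℕ} (H : EucSp n → Mat n → ℝ) (f : EucSp n → ℝ → ℝ)
    (Ω : Set (EucSp n)) (u : EucSp n → ℝ) : Prop :=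
  ∀ ψ : EucSp n → ℝ, ∀ y ∈ Ω, ContDiffAt ℝ 2 ψ y →
    IsLocalMax (fun x => u x - ψ x) y →
    0 ≤ H (gradient ψ y) (hessianAt ψ y) + f y (u y)

/-- Viscosity super-solution of `H(Du, D²u) + f(x,u) = 0` in `Ω`. -/
def ViscSuperSoln {n : ℕ} (H : EucSp n → Mat n → ℝ) (f : EucSp n → ℝ → ℝ)
    (Ω : Set (EucSp n)) (u : EucSp n → ℝ) : Prop :=
  ∀ ψ : EucSp n → ℝ, ∀ y ∈ Ω, ContDiffAt ℝ 2 ψ y →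
    IsLocalMin (fun x => u x - ψ x) y →
    H (gradient ψ y) (hessianAt ψ y) + f y (u y) ≤ 0

def ViscSoln {n : ℕ} (H : EucSp n → Mat n → ℝ) (f : EucSp n → ℝ → ℝ)
    (Ω : Set (EucSp n)) (u : EucSp n → ℝ) : Prop :=
  ViscSubSoln H f Ω u ∧ ViscSuperSoln H f Ω u

/-- `u ∈ C(closure Ω)` solves `H + f = 0` in `Ω` with `u = h` on `∂Ω`. -/
def SolvesBVP {n : ℕ} (H : EucSp n → Mat n → ℝ) (f : EucSp n → ℝ → ℝ)
    (Ω : Set (EucSp n)) (u h : EucSp n → ℝ) : Prop :=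
  ContinuousOn u (closure Ω) ∧ ViscSoln H f Ω u ∧ ∀ x ∈ frontier Ω, u x = h x

/-- Condition A (monotonicity). -/
def CondA {n : ℕ} (H : EucSp n → Mat n → ℝ) : Prop :=
  (∀ p, H p 0 = 0) ∧
  ∀ (p : EucSp n) (X Y : Mat n), X.IsSymm → Y.IsSymm → (Y - X).PosSemidef → H p X ≤ H p Y

/-- Condition B (homogeneity). -/
def CondB {n : ℕ} (H : EucSp n → Mat n → ℝ) (k₁ k₂ : ℝ) : Prop :=
  0 ≤ k₁ ∧ 0 < k₂ ∧
  (∀ (θ : ℝ) (p : EucSp n) (X : Mat n), H (θ • p) X = |θ| ^ k₁ * H p X) ∧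
  (∀ θ : ℝ, 0 < θ → ∀ (p : EucSp n) (X : Mat n), H p (θ • X) = θ ^ k₂ * H p X)

/-- The rank-one matrix `e ⊗ e`. -/
def outer {n : ℕ} (e : EucSp n) : Mat n := fun i j => e i * e j

def m1 {n : ℕ} (H : EucSp n → Mat n → ℝ) (s : ℝ) : ℝ :=
  min (sInf {r | ∃ e : EucSp n, ‖e‖ = 1 ∧ r = H e (1 - s • outer e)})
      (-sSup {r | ∃ e : EucSp n, ‖e‖ = 1 ∧ r = H e (s • outer e - 1)})

def m2 {n : ℕ} (H : EucSp n → Mat n → ℝ) (s : ℝ) : ℝ :=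
  max (sSup {r | ∃ e : EucSp n, ‖e‖ = 1 ∧ r = H e (1 - s • outer e)})
      (-sInf {r | ∃ e : EucSp n, ‖e‖ = 1 ∧ r = H e (s • outer e - 1)})

/-- Condition C (coercivity). -/
def CondC {n : ℕ} (H : EucSp n → Mat n → ℝ) (k₁ k₂ : ℝ) : Prop :=
  0 < m1 H (k₁ / (k₁ + k₂)) ∧
  ∃ s₁ s₀ ℓ : ℝ, s₁ ≤ 1 ∧ 1 ≤ s₀ ∧ 0 < ℓ ∧
    (∀ s ≤ s₁, 0 < m1 H s) ∧ (∀ s, s₀ ≤ s → m2 H s < -ℓ)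

def alphaC (k₁ k₂ : ℝ) : ℝ := (k₁ + 2 * k₂) / (k₁ + k₂)

def sigmaC {n : ℕ} (H : EucSp n → Mat n → ℝ) (k₁ k₂ : ℝ) : ℝ :=
  1 / (alphaC k₁ k₂ * m1 H (k₁ / (k₁ + k₂)) ^ (1 / (k₁ + k₂)))

/-- Condition (i*). -/
def CondIStar {n : ℕ} (H : EucSp n → Mat n → ℝ) : Prop :=
  ∃ s : ℝ, 1 < s ∧ s < 2 ∧ m2 H s < 0

/-- Condition (ii*). -/
def CondIIStar {n : ℕ} (H : EucSp n → Mat n → ℝ) : Prop :=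
  ∃ s : ℝ, 2 ≤ s ∧ ∀ t, s < t → m2 H t < 0

/-- Uniform outer ball condition with radius `ρ`. -/
def UnifOuterBall {n : ℕ} (Ω : Set (EucSp n)) (ρ : ℝ) : Prop :=
  ∀ y ∈ frontier Ω, ∃ z : EucSp n, Metric.ball z ρ ⊆ Ωᶜ ∧ y ∈ Metric.sphere z ρ

/-- Standing assumption (*). -/
def Standing {n : ℕ} (H : EucSp n → Mat n → ℝ) (Ω : Set (EucSp n)) : Prop :=
  CondIStar H ∨ (CondIIStar H ∧ ∃ ρ > 0, UnifOuterBall Ω ρ)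

/-- `spow t k = |t|^(k-1) t`. -/
def spow (t k : ℝ) : ℝ := |t| ^ (k - 1) * t

/-- The set of `λ > 0` such that `H(Du,D²u) + λ a(x)|u|^{k-1}u = 0` in `Ω`, `u = δ` on `∂Ω`,
has a positive solution. -/
def eigenSet {n : ℕ} (H : EucSp n → Mat n → ℝ) (Ω : Set (EucSp n)) (a : EucSp n → ℝ)
    (k δ : ℝ) : Set ℝ :=
  {l : ℝ | 0 < l ∧ ∃ u : EucSp n → ℝ,
    SolvesBVP H (fun x t => l * a x * spow t k) Ω u (fun _ => δ) ∧
    ∀ x ∈ closure Ω, 0 < u x}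

def lamOmega {n : ℕ} (H : EucSp n → Mat n → ℝ) (Ω : Set (EucSp n)) (a : EucSp n → ℝ)
    (k δ : ℝ) : ℝ :=
  sSup (eigenSet H Ω a k δ)

def toVec {n : ℕ} (p : EucSp n) : Fin n → ℝ := p
def ofVec {n : ℕ} (v : Fin n → ℝ) : EucSp n := WithLp.toLp 2 v

/-- Condition D (invariance under rotations and reflections). -/
def CondD {n : ℕ} (H : EucSp n → Mat n → ℝ) : Prop :=
  ∀ Q : Mat n, Qᵀ * Q = 1 →
    ∀ (p : EucSp n) (X : Mat n), H (ofVec (Q.mulVec (toVec p))) (Q * X * Qᵀ) = H p X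

/-!
Inside a ball `B_R(z) ⊆ Ω`, touch a positive solution `u` from below by the largest multiple
`T φ` of `φ(x) = (R² - |x - z|²)²` lying below it. Where `|x - z|` is close to `R`, the Hessian of
`φ` is a positive multiple of `s e⊗e - I` with `s` large, so Condition C gives `H(Dφ, D²φ) ≥ 0`
there, while on the compact rest of the ball `H(Dφ, D²φ) ≥ -C φ^k`. By homogeneity the
super-solution inequality at the touching point reads `T^k H(Dφ, D²φ) + λ a (Tφ)^k ≤ 0`, hence
`λ a ≤ C` and `λ ≤ C / inf a`.
-/

section

variable {n : ℕ}

def bump (t R : ℝ) (z x : EucSp n) : ℝ := t * (R ^ 2 - ‖x - z‖ ^ 2) ^ 2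

lemma bump_self (t R : ℝ) (z : EucSp n) : bump t R z z = t * R ^ 4 := by
  simp only [bump, sub_self, norm_zero]
  ring

lemma contDiff_bump (t R : ℝ) (z : EucSp n) : ContDiff ℝ 2 (bump t R z) :=
  contDiff_const.mul ((contDiff_const.sub ((contDiff_id.sub contDiff_const).norm_sq ℝ)).pow 2)

lemma continuous_bump (t R : ℝ) (z : EucSp n) : Continuous (bump t R z) :=
  (contDiff_bump t R z).continuous

lemma hasFDerivAt_normSq_sub (z x : EucSp n) :
    HasFDerivAt (fun x : EucSp n => ‖x - z‖ ^ 2) ((2 : ℝ) • innerSL ℝ (x - z)) x :=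
  ((hasFDerivAt_id x).sub_const z).norm_sq.congr_fderiv (by ext; simp)

lemma hasFDerivAt_bump (t R : ℝ) (z x : EucSp n) :
    HasFDerivAt (bump t R z) ((-4 * t * (R ^ 2 - ‖x - z‖ ^ 2)) • innerSL ℝ (x - z)) x := by
  have hg : HasDerivAt (fun s : ℝ => t * (R ^ 2 - s) ^ 2)
      (t * (2 * (R ^ 2 - ‖x - z‖ ^ 2) ^ 1 * (0 - 1))) (‖x - z‖ ^ 2) :=
    (((hasDerivAt_const _ _).sub (hasDerivAt_id _)).pow 2).const_mul t
  refine (hg.comp_hasFDerivAt x (hasFDerivAt_normSq_sub z x)).congr_fderiv ?_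
  ext w
  simp only [pow_one, zero_sub, mul_neg, mul_one, map_sub, neg_smul, _root_.neg_apply,
    _root_.smul_apply, _root_.sub_apply, coe_innerSL_apply, smul_eq_mul, neg_mul, neg_inj]
  ring

lemma fderiv_bump (t R : ℝ) (z : EucSp n) :
    fderiv ℝ (bump t R z) =
      fun x => (-4 * t * (R ^ 2 - ‖x - z‖ ^ 2)) • innerSL ℝ (x - z) :=
  funext fun x => (hasFDerivAt_bump t R z x).fderiv

lemma fderiv_fderiv_bump_apply (t R : ℝ) (z y v w : EucSp n) :
    fderiv ℝ (fderiv ℝ (bump t R z)) y v w =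
      -4 * t * (R ^ 2 - ‖y - z‖ ^ 2) * inner ℝ v w
        + 8 * t * inner ℝ (y - z) v * inner ℝ (y - z) w := by
  have hc : HasFDerivAt (fun x : EucSp n => -4 * t * (R ^ 2 - ‖x - z‖ ^ 2))
      ((8 * t) • innerSL ℝ (y - z)) y :=
    (((hasFDerivAt_const _ y).sub (hasFDerivAt_normSq_sub z y)).const_mul (-4 * t)).congr_fderiv
      (by ext; simp only [neg_mul, map_sub, zero_sub, smul_neg, neg_smul, neg_neg,
        _root_.smul_apply, _root_.sub_apply, coe_innerSL_apply, smul_eq_mul]; ring)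
  have hf : HasFDerivAt (fun x : EucSp n => innerSL ℝ (x - z)) (innerSL ℝ) y :=
    ((innerSL ℝ).hasFDerivAt.comp y ((hasFDerivAt_id y).sub_const z)).congr_fderiv (by ext; simp)
  have h : HasFDerivAt
      (fun x => (-4 * t * (R ^ 2 - ‖x - z‖ ^ 2)) • innerSL ℝ (x - z)) _ y := hc.smul hf
  rw [fderiv_bump, h.fderiv]
  have hvw : (innerSL ℝ : EucSp n →L[ℝ] EucSp n →L[ℝ] ℝ) v w = inner ℝ v w := rfl
  simp only [_root_.add_apply, FunLike.coe_smul, Pi.smul_apply, ContinuousLinearMap.smulRight_apply,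
    innerSL_apply_apply, smul_eq_mul, hvw]

lemma gradient_bump (t R : ℝ) (z y : EucSp n) :
    gradient (bump t R z) y = t • (-4 * (R ^ 2 - ‖y - z‖ ^ 2)) • (y - z) := by
  refine HasGradientAt.gradient (hasGradientAt_iff_hasFDerivAt.2 ?_)
  refine (hasFDerivAt_bump t R z y).congr_fderiv ?_
  ext w
  simp only [map_smul, InnerProductSpace.toDual_apply_apply, _root_.smul_apply,
    coe_innerSL_apply, smul_eq_mul]
  ring

lemma hessianAt_bump (t R : ℝ) (z y : EucSp n) :
    hessianAt (bump t R z) y =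
      t • ((8 : ℝ) • outer (y - z) - (4 * (R ^ 2 - ‖y - z‖ ^ 2)) • 1) := by
  have hsingle : ∀ (v : EucSp n) i, inner ℝ v (EuclideanSpace.single i 1) = v i := by
    simp [EuclideanSpace.inner_single_right]
  ext i j
  have hone : (EuclideanSpace.single i (1 : ℝ)) j = (1 : Mat n) i j := by
    rw [PiLp.single_apply, Matrix.one_apply]
    exact if_congr eq_comm rfl rfl
  simp only [hessianAt, iteratedFDeriv_two_apply, Matrix.cons_val_zero, Matrix.cons_val_one,
    fderiv_fderiv_bump_apply, hsingle, hone, Matrix.smul_apply, Matrix.sub_apply, outer,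
    smul_eq_mul]
  ring

lemma outer_smul (c : ℝ) (e : EucSp n) : outer (c • e) = c ^ 2 • outer e := by
  ext i j
  simp only [outer, PiLp.smul_apply, smul_eq_mul, Matrix.smul_apply]
  ring

lemma continuous_outer : Continuous (outer : EucSp n → Mat n) := by
  unfold outer
  fun_prop

lemma spow_of_pos {t : ℝ} (ht : 0 < t) (k : ℝ) : spow t k = t ^ k := by
  rw [spow, abs_of_pos ht, ← Real.rpow_add_one ht.ne', sub_add_cancel]

lemma IsCompact.exists_touching_mul_le {X : Type*} [TopologicalSpace X] {K : Set X}
    (hK : IsCompact K) {u φ : X → ℝ} (hu : ContinuousOn u K) (hφ : ContinuousOn φ K)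
    (hu0 : ∀ x ∈ K, 0 < u x) (hφ0 : ∃ x ∈ K, 0 < φ x) :
    ∃ T > 0, ∃ y ∈ K, u y = T * φ y ∧ ∀ x ∈ K, T * φ x ≤ u x := by
  obtain ⟨x₀, hx₀, hφx₀⟩ := hφ0
  obtain ⟨y, hy, hmax⟩ :=
    hK.exists_isMaxOn ⟨x₀, hx₀⟩ (hφ.div hu fun x hx => (hu0 x hx).ne')
  have hφy : 0 < φ y := by
    have h := (div_pos hφx₀ (hu0 x₀ hx₀)).trans_le (hmax hx₀)
    exact (div_pos_iff_of_pos_right (hu0 y hy)).1 h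
  refine ⟨u y / φ y, div_pos (hu0 y hy) hφy, y, hy, by field_simp, fun x hx => ?_⟩
  have h : φ x / u x ≤ φ y / u y := hmax hx
  rw [div_le_div_iff₀ (hu0 x hx) (hu0 y hy)] at h
  rw [div_mul_eq_mul_div, div_le_iff₀ hφy]
  linarith

variable {H : EucSp n → Mat n → ℝ} {k₁ k₂ : ℝ}

lemma CondB.apply_smul_smul (hB : CondB H k₁ k₂) {T : ℝ} (hT : 0 < T) (p : EucSp n)
    (X : Mat n) :
    H (T • p) (T • X) = T ^ (k₁ + k₂) * H p X := by
  obtain ⟨-, -, hp, hX⟩ := hB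
  rw [hp, hX T hT, abs_of_pos hT, Real.rpow_add hT]
  ring

lemma pos_of_m2_neg {s : ℝ} (hs : m2 H s < 0) {e : EucSp n} (he : ‖e‖ = 1) :
    0 < H e (s • outer e - 1) := by
  have hS : 0 < sInf {r | ∃ e : EucSp n, ‖e‖ = 1 ∧ r = H e (s • outer e - 1)} := by
    unfold m2 at hs
    linarith [le_max_right (sSup {r | ∃ e : EucSp n, ‖e‖ = 1 ∧ r = H e (1 - s • outer e)})
      (-sInf {r | ∃ e : EucSp n, ‖e‖ = 1 ∧ r = H e (s • outer e - 1)})]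
  have hbdd : BddBelow {r | ∃ e : EucSp n, ‖e‖ = 1 ∧ r = H e (s • outer e - 1)} := by
    by_contra h
    rw [Real.sInf_of_not_bddBelow h] at hS
    exact hS.false
  exact hS.trans_le (csInf_le hbdd ⟨e, he, rfl⟩)

lemma CondC.exists_forall_ge_nonneg (hC : CondC H k₁ k₂) :
    ∃ s₀ : ℝ, 0 ≤ s₀ ∧
      ∀ s, s₀ ≤ s → ∀ e : EucSp n, ‖e‖ = 1 → 0 ≤ H e (s • outer e - 1) := by
  obtain ⟨-, _, s₀, ℓ, -, hs₀, hℓ, -, hm2⟩ := hC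
  exact ⟨s₀, by linarith, fun s hs e he =>
    (pos_of_m2_neg ((hm2 s hs).trans (neg_neg_of_pos hℓ)) he).le⟩

lemma H_bump_smul (hB : CondB H k₁ k₂) {T : ℝ} (hT : 0 < T) (R : ℝ) (z y : EucSp n) :
    H (gradient (bump T R z) y) (hessianAt (bump T R z) y) =
      T ^ (k₁ + k₂) * H (gradient (bump 1 R z) y) (hessianAt (bump 1 R z) y) := by
  simp only [gradient_bump, hessianAt_bump, one_smul, hB.apply_smul_smul hT]

lemma H_bump_nonneg (hB : CondB H k₁ k₂) {R s : ℝ} {y z : EucSp n} (hyz : y ≠ z)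
    (hyR : ‖y - z‖ < R) (hs : 2 * ‖y - z‖ ^ 2 = s * (R ^ 2 - ‖y - z‖ ^ 2))
    (hH : ∀ e : EucSp n, ‖e‖ = 1 → 0 ≤ H e (s • outer e - 1)) :
    0 ≤ H (gradient (bump 1 R z) y) (hessianAt (bump 1 R z) y) := by
  obtain ⟨-, -, hp, hX⟩ := hB
  set r := ‖y - z‖
  have hr : 0 < r := norm_pos_iff.2 (sub_ne_zero.2 hyz)
  have hRr : 0 < R ^ 2 - r ^ 2 := by nlinarith
  set e := r⁻¹ • (y - z)
  have he : ‖e‖ = 1 := by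
    rw [norm_smul, norm_inv, Real.norm_of_nonneg hr.le, inv_mul_cancel₀ hr.ne']
  have hye : y - z = r • e := by simp [e, smul_smul, hr.ne']
  have hgrad : gradient (bump 1 R z) y = (-4 * (R ^ 2 - r ^ 2) * r) • e := by
    rw [gradient_bump, one_smul]
    change (-4 * (R ^ 2 - r ^ 2)) • (y - z) = _
    rw [hye, smul_smul]
  have hhess : hessianAt (bump 1 R z) y = (4 * (R ^ 2 - r ^ 2)) • (s • outer e - 1) := by
    rw [hessianAt_bump, one_smul]
    change (8 : ℝ) • outer (y - z) - (4 * (R ^ 2 - r ^ 2)) • 1 = _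
    rw [hye, outer_smul, smul_sub, smul_smul, smul_smul]
    congr 2
    linear_combination 4 * hs
  rw [hgrad, hhess, hp, hX _ (by positivity)]
  exact mul_nonneg (Real.rpow_nonneg (abs_nonneg _) _)
    (mul_nonneg (Real.rpow_nonneg (by positivity) _) (hH e he))

lemma exists_neg_mul_rpow_le_H_bump (hH : Continuous fun q : EucSp n × Mat n => H q.1 q.2)
    (hB : CondB H k₁ k₂) {s₀ : ℝ} (hs₀ : 0 ≤ s₀)
    (hH₀ : ∀ s, s₀ ≤ s → ∀ e : EucSp n, ‖e‖ = 1 → 0 ≤ H e (s • outer e - 1))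
    (z : EucSp n) {R : ℝ} (hR : 0 < R) (k : ℝ) :
    ∃ C, ∀ y ∈ Metric.ball z R,
      -(C * bump 1 R z y ^ k) ≤ H (gradient (bump 1 R z) y) (hessianAt (bump 1 R z) y) := by
  set G := fun y => H (gradient (bump 1 R z) y) (hessianAt (bump 1 R z) y)
  set K := Metric.closedBall z R ∩ {y | 2 * ‖y - z‖ ^ 2 ≤ s₀ * (R ^ 2 - ‖y - z‖ ^ 2)}
  have hK : IsCompact K :=
    (isCompact_closedBall z R).inter_right (isClosed_le (by fun_prop) (by fun_prop))
  have hbump : ∀ y ∈ K, 0 < bump 1 R z y := by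
    rintro y ⟨-, hy⟩
    have hy' : 2 * ‖y - z‖ ^ 2 ≤ s₀ * (R ^ 2 - ‖y - z‖ ^ 2) := hy
    have : ‖y - z‖ ^ 2 < R ^ 2 := by
      by_contra h
      nlinarith [mul_nonneg hs₀ (sub_nonneg.2 (not_lt.1 h))]
    simp only [bump, one_mul]
    positivity
  have hG : Continuous G := by
    have hgrad : Continuous fun y => gradient (bump 1 R z) y := by
      simp only [gradient_bump]
      fun_prop
    have hhess : Continuous fun y => hessianAt (bump 1 R z) y := by
      have := continuous_outer.comp (continuous_sub_right z)
      simp only [hessianAt_bump]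
      fun_prop
    exact hH.comp (hgrad.prodMk hhess)
  obtain ⟨m, hm⟩ := hK.bddBelow_image (hG.continuousOn.div
    ((continuous_bump 1 R z).continuousOn.rpow_const fun y hy => Or.inl (hbump y hy).ne')
    fun y hy => (Real.rpow_pos_of_pos (hbump y hy) k).ne')
  refine ⟨max 0 (-m), fun y hy => ?_⟩
  by_cases hyK : y ∈ K
  · have hmy : m ≤ G y / bump 1 R z y ^ k := hm ⟨y, hyK, rfl⟩
    rw [le_div_iff₀ (Real.rpow_pos_of_pos (hbump y hyK) k)] at hmy
    nlinarith [le_max_right 0 (-m), Real.rpow_pos_of_pos (hbump y hyK) k]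
  · rw [Metric.mem_ball, dist_eq_norm] at hy
    have hRy : 0 < R ^ 2 - ‖y - z‖ ^ 2 := by nlinarith [norm_nonneg (y - z)]
    have hlt : s₀ * (R ^ 2 - ‖y - z‖ ^ 2) < 2 * ‖y - z‖ ^ 2 := by
      by_contra h
      exact hyK ⟨Metric.ball_subset_closedBall (by rwa [Metric.mem_ball, dist_eq_norm]),
        not_lt.1 h⟩
    have hyz : y ≠ z := by
      rintro rfl
      simp only [sub_self, norm_zero] at hlt
      nlinarith
    have hGy : 0 ≤ G y := H_bump_nonneg hB hyz hy (div_mul_cancel₀ _ hRy.ne').symm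
      (hH₀ _ ((le_div_iff₀ hRy).2 hlt.le))
    have : 0 ≤ max 0 (-m) * bump 1 R z y ^ k :=
      mul_nonneg (le_max_left _ _) (Real.rpow_nonneg (by simp only [bump]; positivity) _)
    linarith

lemma ViscSuperSoln.mul_le_of_touching_bump {Ω : Set (EucSp n)} {a u : EucSp n → ℝ}
    {l C R T : ℝ} {y z : EucSp n}
    (hsuper : ViscSuperSoln H (fun x t => l * a x * spow t (k₁ + k₂)) Ω u)
    (hB : CondB H k₁ k₂) (hyΩ : y ∈ Ω) (hT : 0 < T)
    (hmin : IsLocalMin (fun x => u x - bump T R z x) y)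
    (huy : u y = T * bump 1 R z y) (hbump : 0 < bump 1 R z y)
    (hCG : -(C * bump 1 R z y ^ (k₁ + k₂)) ≤
      H (gradient (bump 1 R z) y) (hessianAt (bump 1 R z) y)) :
    l * a y ≤ C := by
  have hsup := hsuper _ y hyΩ (contDiff_bump T R z).contDiffAt hmin
  dsimp only at hsup
  rw [H_bump_smul hB hT, spow_of_pos (huy ▸ mul_pos hT hbump), huy,
    Real.mul_rpow hT.le hbump.le] at hsup
  have hTk := Real.rpow_pos_of_pos hT (k₁ + k₂)
  have hφk := Real.rpow_pos_of_pos hbump (k₁ + k₂)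
  refine le_of_mul_le_mul_right ?_ hφk
  nlinarith

lemma eigenSet_bddAbove {Ω : Set (EucSp n)} (hΩ : IsOpen Ω) (hne : Ω.Nonempty)
    (hH : Continuous fun q : EucSp n × Mat n => H q.1 q.2) (hB : CondB H k₁ k₂)
    (hC : CondC H k₁ k₂) (δ : ℝ) {a : EucSp n → ℝ} (ha : 0 < sInf (a '' Ω)) :
    BddAbove (eigenSet H Ω a (k₁ + k₂) δ) := by
  obtain ⟨z, hz⟩ := hne
  obtain ⟨R, hR, hRΩ⟩ := Metric.nhds_basis_closedBall.mem_iff.1 (hΩ.mem_nhds hz)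
  obtain ⟨s₀, hs₀, hH₀⟩ := hC.exists_forall_ge_nonneg
  obtain ⟨C, hCG⟩ := exists_neg_mul_rpow_le_H_bump hH hB hs₀ hH₀ z hR (k₁ + k₂)
  have ha_bdd : BddBelow (a '' Ω) := by
    by_contra h
    rw [Real.sInf_of_not_bddBelow h] at ha
    exact ha.false
  refine ⟨C / sInf (a '' Ω), ?_⟩
  rintro l ⟨hl, u, ⟨hu, ⟨-, hsuper⟩, -⟩, hu0⟩
  have hu0' : ∀ x ∈ Metric.closedBall z R, 0 < u x :=
    fun x hx => hu0 x (subset_closure (hRΩ hx))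
  obtain ⟨T, hT, y, hyK, huy, hle⟩ := (isCompact_closedBall z R).exists_touching_mul_le
    (hu.mono (hRΩ.trans subset_closure)) (continuous_bump 1 R z).continuousOn hu0'
    ⟨z, Metric.mem_closedBall_self hR.le, by rw [bump_self]; positivity⟩
  have hbump_y : 0 < bump 1 R z y := pos_of_mul_pos_right (huy ▸ hu0' y hyK) hT.le
  have hy : y ∈ Metric.ball z R := by
    rw [Metric.mem_closedBall, dist_eq_norm] at hyK
    rw [Metric.mem_ball, dist_eq_norm]
    refine hyK.lt_of_ne fun h => ?_
    simp [bump, h] at hbump_y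
  have hmin : IsLocalMin (fun x => u x - bump T R z x) y := by
    filter_upwards [Metric.isOpen_ball.mem_nhds hy] with x hx
    have hbT : ∀ x, bump T R z x = T * bump 1 R z x := fun x => by simp only [bump, one_mul]
    simp only [hbT]
    linarith [hle x (Metric.ball_subset_closedBall hx)]
  have hyΩ : y ∈ Ω := hRΩ (Metric.ball_subset_closedBall hy)
  have hlay := hsuper.mul_le_of_touching_bump hB hyΩ hT hmin huy hbump_y (hCG y hy)
  rw [le_div_iff₀ ha]
  exact (mul_le_mul_of_nonneg_left (csInf_le ha_bdd ⟨y, hyΩ, rfl⟩) hl.le).trans hlay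

end

theorem stmt_17_general {n : ℕ} (Ω : Set (EucSp n)) (hΩ : IsBoundedDomain Ω)
    (H : EucSp n → Mat n → ℝ) (hH : Continuous fun q : EucSp n × Mat n => H q.1 q.2)
    (k₁ k₂ : ℝ) (hB : CondB H k₁ k₂) (hC : CondC H k₁ k₂)
    (δ : ℝ)
    (a : EucSp n → ℝ)
    (hainf : 0 < sInf (a '' Ω)) :
    (CondIStar H → BddAbove (eigenSet H Ω a (k₁ + k₂) δ)) ∧
    (CondIIStar H → (∃ ρ > (0 : ℝ), UnifOuterBall Ω ρ) → CondD H →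
      BddAbove (eigenSet H Ω a (k₁ + k₂) δ)) := by
  have h := eigenSet_bddAbove hΩ.1 hΩ.2.1.nonempty hH hB hC δ hainf
  exact ⟨fun _ => h, fun _ _ _ => h⟩

/-- Finiteness of `λ_Ω` (Theorem 1.6). -/
theorem stmt_17 {n : ℕ} (hn : 2 ≤ n) (Ω : Set (EucSp n)) (hΩ : IsBoundedDomain Ω)
    (H : EucSp n → Mat n → ℝ) (hH : Continuous fun q : EucSp n × Mat n => H q.1 q.2)
    (k₁ k₂ : ℝ) (hA : CondA H) (hB : CondB H k₁ k₂) (hC : CondC H k₁ k₂)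
    (δ : ℝ) (hδ : 0 < δ)
    (a : EucSp n → ℝ) (ha : ContinuousOn a Ω)
    (hainf : 0 < sInf (a '' Ω)) (hasup : BddAbove (a '' Ω)) :
    (CondIStar H → BddAbove (eigenSet H Ω a (k₁ + k₂) δ)) ∧
    (CondIIStar H → (∃ ρ > (0 : ℝ), UnifOuterBall Ω ρ) → CondD H →
      BddAbove (eigenSet H Ω a (k₁ + k₂) δ)) :=
  stmt_17_general Ω hΩ H hH k₁ k₂ hB hC δ a hainf
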